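/- arXiv:2009.12955 — 2 statements merged into one kernel-verified Lean document; each statement's English description precedes it below -/
import Mathlib

section
/- In the circular construction C_m[G₀,…,G_{m−1}], if in addition to α(Gᵢ) = αᵢ + 1, α(Gᵢ ∩ Vᵢ′) ≤ αᵢ one also has α(Gᵢ ∩ Vᵢ″) ≤ αᵢ for all i, then every independent set A satisfies |A| ≤ Σ_{i∈Z/m} (αᵢ − 1 + χᵢ), where χᵢ = 1 if A ∩ Wᵢ ≠ ∅ and χᵢ = 0 otherwise. -/
open Finset

/-- Vertex set of the circular construction: `Wᵢ = Vᵢ' × V_{i+1}''`,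
where `P i` plays the role of `Vᵢ'` and `Q i` that of `Vᵢ''`. -/
abbrev CVtx (m : ℕ) (P Q : ZMod m → Type) := Σ i : ZMod m, P i × Q (i + 1)

/-- The map `hᵢ : Wᵢ ∪ W_{i+1} → V(G_{i+1})`, sending `w ∈ Wᵢ` to `gᵢ(w) ∈ V_{i+1}''`
and `w ∈ W_{i+1}` to `f_{i+1}(w) ∈ V_{i+1}'` (and everything else to `none`). -/
def hmap {m : ℕ} {P Q : ZMod m → Type} (i : ZMod m) (v : CVtx m P Q) :
    Option (P (i + 1) ⊕ Q (i + 1)) :=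
  if h : v.1 = i then some (Sum.inr (cast (congrArg (fun j => Q (j + 1)) h) v.2.2))
  else if h' : v.1 = i + 1 then some (Sum.inl (cast (congrArg P h') v.2.1))
  else none

/-- First coordinate (within `Wᵢ`) of a vertex, `none` outside `Wᵢ`. -/
def fmap {m : ℕ} {P Q : ZMod m → Type} (i : ZMod m) (v : CVtx m P Q) :
    Option (P i) :=
  if h : v.1 = i then some (cast (congrArg P h) v.2.1) else none

/-- Edges `Eᵢ¹`: quadruples in `Wᵢ ∪ W_{i+1}` meeting `Wᵢ` in a single fiber
`W_{i,x}` (i.e. `βᵢ = 1`), whose `hᵢ`-images form an edge of `G_{i+1}`. -/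
def IsE1 {m : ℕ} {P Q : ZMod m → Type}
    [∀ i, DecidableEq (P i)] [∀ i, DecidableEq (Q i)]
    (EG : ∀ i : ZMod m, Finset (Finset (P i ⊕ Q i)))
    (i : ZMod m) (e : Finset (CVtx m P Q)) : Prop :=
  e.card = 4 ∧ (∃ v ∈ e, v.1 = i) ∧
  (∀ v ∈ e, ∀ w ∈ e, v.1 = i → w.1 = i → fmap i v = fmap i w) ∧
  ∃ b ∈ EG (i + 1), e.image (hmap i) = b.image some

/-- Edges `Eᵢ²`: quadruples in `Wᵢ` consisting of two pairs lying in two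
distinct fibers `W_{i,x₁}`, `W_{i,x₂}`. -/
def IsE2 {m : ℕ} {P Q : ZMod m → Type}
    [∀ i, DecidableEq (P i)] [∀ i, DecidableEq (Q i)] (i : ZMod m)
    (e : Finset (CVtx m P Q)) : Prop :=
  ∃ (x₁ x₂ : P i) (y₁ y₂ y₃ y₄ : Q (i + 1)), x₁ ≠ x₂ ∧ y₁ ≠ y₂ ∧ y₃ ≠ y₄ ∧
    e = {(⟨i, (x₁, y₁)⟩ : CVtx m P Q), ⟨i, (x₁, y₂)⟩, ⟨i, (x₂, y₃)⟩, ⟨i, (x₂, y₄)⟩}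

/-- Edges `Eᵢ⁴`: quadruples in `Wᵢ` with pairwise distinct first coordinates
forming an edge of `Gᵢ` inside `Vᵢ'`. -/
def IsE4 {m : ℕ} {P Q : ZMod m → Type}
    [∀ i, DecidableEq (P i)] [∀ i, DecidableEq (Q i)]
    (EG : ∀ i : ZMod m, Finset (Finset (P i ⊕ Q i)))
    (i : ZMod m) (e : Finset (CVtx m P Q)) : Prop :=
  e.card = 4 ∧ (∀ v ∈ e, v.1 = i) ∧
  ∃ s : Finset (P i), s.card = 4 ∧ s.image Sum.inl ∈ EG i ∧
    e.image (fmap i) = s.image some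

/-- Edge predicate of the circular construction `C_m[G₀,…,G_{m-1}]`. -/
def IsCircEdge {m : ℕ} {P Q : ZMod m → Type}
    [∀ i, DecidableEq (P i)] [∀ i, DecidableEq (Q i)]
    (EG : ∀ i : ZMod m, Finset (Finset (P i ⊕ Q i)))
    (e : Finset (CVtx m P Q)) : Prop :=
  ∃ i : ZMod m, IsE1 EG i e ∨ IsE2 i e ∨ IsE4 EG i e

/-- Independence number of the hypergraph with edge set `E` restricted to `S`. -/
noncomputable def indepNumOn {V : Type} [Fintype V] [DecidableEq V]
    (E : Finset (Finset V)) (S : Finset V) : ℕ :=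
  (S.powerset.filter fun A => ∀ e ∈ E, ¬ e ⊆ A).sup Finset.card

section Aux
set_option linter.unusedSectionVars false
variable {m : ℕ} {P Q : ZMod m → Type}
  [∀ i, Fintype (P i)] [∀ i, Fintype (Q i)]
  [∀ i, DecidableEq (P i)] [∀ i, DecidableEq (Q i)]

lemma fmap_mk (i : ZMod m) (p : P i × Q (i+1)) :
    fmap (P := P) (Q := Q) i ⟨i, p⟩ = some p.1 := by simp [fmap]

lemma fmap_mk_ne {i j : ZMod m} (h : j ≠ i) (p : P j × Q (j+1)) :
    fmap (P := P) (Q := Q) i ⟨j, p⟩ = none := by simp [fmap, h]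

lemma hmap_mk_self (i : ZMod m) (p : P i × Q (i+1)) :
    hmap (P := P) (Q := Q) i ⟨i, p⟩ = some (Sum.inr p.2) := by simp [hmap]

lemma hmap_mk_succ {i : ZMod m} (h : i + 1 ≠ i) (p : P (i+1) × Q (i+1+1)) :
    hmap (P := P) (Q := Q) i ⟨i+1, p⟩ = some (Sum.inl p.1) := by simp [hmap, h]

lemma succ_ne (hm : 2 ≤ m) (i : ZMod m) : i + 1 ≠ i := by
  haveI : Fact (1 < m) := ⟨hm⟩
  simp

variable (A : Finset (CVtx m P Q))

/-- set of first coordinates of `A ∩ Wᵢ`. -/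
def Xset (i : ZMod m) : Finset (P i) :=
  Finset.univ.filter fun x => ∃ y, (⟨i, (x, y)⟩ : CVtx m P Q) ∈ A

/-- fiber of `A ∩ Wᵢ` over `x`. -/
def Fib (i : ZMod m) (x : P i) : Finset (Q (i+1)) :=
  Finset.univ.filter fun y => (⟨i, (x, y)⟩ : CVtx m P Q) ∈ A

/-- maximal fiber size. -/
noncomputable def bmax (i : ZMod m) : ℕ := (Xset A i).sup fun x => (Fib A i x).card

lemma mem_Xset {i : ZMod m} {x : P i} :
    x ∈ Xset A i ↔ ∃ y, (⟨i, (x, y)⟩ : CVtx m P Q) ∈ A := by simp [Xset]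

lemma mem_Fib {i : ZMod m} {x : P i} {y : Q (i+1)} :
    y ∈ Fib A i x ↔ (⟨i, (x, y)⟩ : CVtx m P Q) ∈ A := by simp [Fib]

lemma le_indepNumOn {V : Type} [Fintype V] [DecidableEq V]
    {E : Finset (Finset V)} {S B : Finset V} (hBS : B ⊆ S)
    (hB : ∀ e ∈ E, ¬ e ⊆ B) : B.card ≤ indepNumOn E S :=
  Finset.le_sup (Finset.mem_filter.2 ⟨Finset.mem_powerset.2 hBS, hB⟩)

end Aux
section Aux2
set_option linter.unusedSectionVars false
variable {m : ℕ} {P Q : ZMod m → Type}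
  [∀ i, Fintype (P i)] [∀ i, Fintype (Q i)]
  [∀ i, DecidableEq (P i)] [∀ i, DecidableEq (Q i)]
  (A : Finset (CVtx m P Q))

/-- a witness second coordinate for `x ∈ Xset A i`. -/
noncomputable def wit {i : ZMod m} {x : P i} (h : x ∈ Xset A i) : Q (i+1) :=
  ((mem_Xset A).1 h).choose

lemma wit_spec {i : ZMod m} {x : P i} (h : x ∈ Xset A i) :
    (⟨i, (x, wit A h)⟩ : CVtx m P Q) ∈ A :=
  ((mem_Xset A).1 h).choose_spec

variable (EG : ∀ i : ZMod m, Finset (Finset (P i ⊕ Q i)))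

lemma lem_inl (hEG : ∀ i, ∀ b ∈ EG i, b.card = 4)
    (hA : ∀ e, IsCircEdge EG e → ¬ e ⊆ A) (i : ZMod m) :
    ∀ b ∈ EG i, ¬ b ⊆ (Xset A i).image Sum.inl := by
  intro b hb hsub
  set s : Finset (P i) := (Xset A i).filter (fun x => Sum.inl x ∈ b) with hs
  have hbs : b = s.image Sum.inl := by
    ext v; constructor
    · intro hv
      obtain ⟨x, hx, rfl⟩ := Finset.mem_image.1 (hsub hv)
      exact Finset.mem_image.2 ⟨x, Finset.mem_filter.2 ⟨hx, hv⟩, rfl⟩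
    · intro hv
      obtain ⟨x, hx, rfl⟩ := Finset.mem_image.1 hv
      exact (Finset.mem_filter.1 hx).2
  have hscard : s.card = 4 := by
    have h4 := hEG i b hb
    rwa [hbs, Finset.card_image_of_injective _ Sum.inl_injective] at h4
  have hsX : ∀ x ∈ s, x ∈ Xset A i := fun x hx => (Finset.mem_filter.1 hx).1
  set f : {x // x ∈ s} → CVtx m P Q :=
    (fun xp => ⟨i, (xp.1, wit A (hsX xp.1 xp.2))⟩) with hf
  set e : Finset (CVtx m P Q) := s.attach.image f with he
  have hfinj : Function.Injective f := by
    rintro ⟨x₁, h₁⟩ ⟨x₂, h₂⟩ h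
    simp only [hf, Sigma.mk.inj_iff, heq_eq_eq, Prod.mk.injEq, true_and] at h
    exact Subtype.ext h.1
  have hecard : e.card = 4 := by
    rw [he, Finset.card_image_of_injective _ hfinj, Finset.card_attach, hscard]
  have heA : e ⊆ A := by
    intro v hv
    obtain ⟨xp, -, rfl⟩ := Finset.mem_image.1 hv
    exact wit_spec A _
  have himg : e.image (fmap i) = s.image some := by
    rw [he, Finset.image_image]
    conv_rhs => rw [← Finset.attach_image_val (s := s), Finset.image_image]
    apply Finset.image_congr
    rintro ⟨x, hx⟩ -
    simp only [Function.comp_apply, hf, fmap_mk]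
  have hIsE4 : IsE4 EG i e := by
    refine ⟨hecard, ?_, s, hscard, hbs ▸ hb, himg⟩
    intro v hv
    obtain ⟨xp, -, rfl⟩ := Finset.mem_image.1 hv
    rfl
  exact hA e ⟨i, Or.inr (Or.inr hIsE4)⟩ heA

lemma key0 (hEG : ∀ i, ∀ b ∈ EG i, b.card = 4)
    (hA : ∀ e, IsCircEdge EG e → ¬ e ⊆ A)
    {α : ZMod m → ℕ}
    (hα' : ∀ i, indepNumOn (EG i)
      (Finset.univ.filter fun v => Sum.isLeft v = true) ≤ α i)
    (i : ZMod m) : (Xset A i).card ≤ α i := by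
  have h1 : ((Xset A i).image (Sum.inl : P i → P i ⊕ Q i)).card ≤ indepNumOn (EG i)
      (Finset.univ.filter fun v => Sum.isLeft v = true) := by
    apply le_indepNumOn
    · intro v hv
      obtain ⟨x, -, rfl⟩ := Finset.mem_image.1 hv
      simp
    · intro b hb hsub
      exact lem_inl A EG hEG hA i b hb hsub
  rw [Finset.card_image_of_injective _ (Sum.inl_injective (α := P i) (β := Q i))] at h1
  exact h1.trans (hα' i)

end Aux2
section Aux3
set_option linter.unusedSectionVars false
variable {m : ℕ} {P Q : ZMod m → Type}
  [∀ i, Fintype (P i)] [∀ i, Fintype (Q i)]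
  [∀ i, DecidableEq (P i)] [∀ i, DecidableEq (Q i)]
  (A : Finset (CVtx m P Q))
  (EG : ∀ i : ZMod m, Finset (Finset (P i ⊕ Q i)))

lemma alpha_pos (hEG : ∀ i, ∀ b ∈ EG i, b.card = 4) {α : ZMod m → ℕ}
    (hα : ∀ i, indepNumOn (EG i) Finset.univ = α i + 1)
    (hα' : ∀ i, indepNumOn (EG i)
      (Finset.univ.filter fun v => Sum.isLeft v = true) ≤ α i)
    (hα'' : ∀ i, indepNumOn (EG i)
      (Finset.univ.filter fun v => Sum.isRight v = true) ≤ α i)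
    (i : ZMod m) : 1 ≤ α i := by
  by_contra h
  have hα0 : α i = 0 := by omega
  have hsing : ∀ (v : P i ⊕ Q i) (S : Finset (P i ⊕ Q i)), v ∈ S →
      1 ≤ indepNumOn (EG i) S := by
    intro v S hv
    have hle := le_indepNumOn (E := EG i) (B := {v}) (by simpa using hv)
      (fun e he hsub => by
        have h4 := hEG i e he
        have hc := Finset.card_le_card hsub
        simp [h4] at hc)
    simpa using hle
  have hP : IsEmpty (P i) := by
    constructor
    intro x
    have h1 := hsing (Sum.inl x) (Finset.univ.filter fun v => Sum.isLeft v = true)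
      (by simp)
    have h2 := hα' i
    omega
  have hQ : IsEmpty (Q i) := by
    constructor
    intro y
    have h1 := hsing (Sum.inr y) (Finset.univ.filter fun v => Sum.isRight v = true)
      (by simp)
    have h2 := hα'' i
    omega
  haveI := hP; haveI := hQ
  have h0 : indepNumOn (EG i) (Finset.univ : Finset (P i ⊕ Q i)) = 0 := by
    apply Nat.le_zero.1
    apply Finset.sup_le
    intro B hB
    have hBu : B ⊆ Finset.univ := Finset.mem_powerset.1 (Finset.mem_filter.1 hB).1
    rw [Finset.univ_eq_empty] at hBu
    simp [Finset.subset_empty.1 hBu]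
  rw [hα i] at h0
  omega

lemma heavy_unique (hA : ∀ e, IsCircEdge EG e → ¬ e ⊆ A) (i : ZMod m)
    {x₁ x₂ : P i} (hne : x₁ ≠ x₂)
    (h1 : 2 ≤ (Fib A i x₁).card) (h2 : 2 ≤ (Fib A i x₂).card) : False := by
  obtain ⟨y₁, hy₁, y₂, hy₂, hy12⟩ := Finset.one_lt_card.1 (by omega : 1 < (Fib A i x₁).card)
  obtain ⟨y₃, hy₃, y₄, hy₄, hy34⟩ := Finset.one_lt_card.1 (by omega : 1 < (Fib A i x₂).card)
  set e : Finset (CVtx m P Q) :=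
    {(⟨i, (x₁, y₁)⟩ : CVtx m P Q), ⟨i, (x₁, y₂)⟩, ⟨i, (x₂, y₃)⟩, ⟨i, (x₂, y₄)⟩} with he
  have hE2 : IsE2 i e := ⟨x₁, x₂, y₁, y₂, y₃, y₄, hne, hy12, hy34, rfl⟩
  refine hA e ⟨i, Or.inr (Or.inl hE2)⟩ ?_
  intro v hv
  simp only [he, Finset.mem_insert, Finset.mem_singleton] at hv
  rcases hv with rfl | rfl | rfl | rfl
  · exact (mem_Fib A).1 hy₁
  · exact (mem_Fib A).1 hy₂
  · exact (mem_Fib A).1 hy₃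
  · exact (mem_Fib A).1 hy₄

end Aux3
section Aux4
set_option linter.unusedSectionVars false
variable {m : ℕ} {P Q : ZMod m → Type}
  [∀ i, Fintype (P i)] [∀ i, Fintype (Q i)]
  [∀ i, DecidableEq (P i)] [∀ i, DecidableEq (Q i)]
  (A : Finset (CVtx m P Q))
  (EG : ∀ i : ZMod m, Finset (Finset (P i ⊕ Q i)))

lemma build_E1 (hEG : ∀ i, ∀ b ∈ EG i, b.card = 4)
    (hA : ∀ e, IsCircEdge EG e → ¬ e ⊆ A) (i : ZMod m) (x : P i)
    {b : Finset (P (i+1) ⊕ Q (i+1))} (hb : b ∈ EG (i+1))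
    (ψ : P (i+1) ⊕ Q (i+1) → CVtx m P Q)
    (hψA : ∀ v ∈ b, ψ v ∈ A)
    (hψh : ∀ v ∈ b, hmap i (ψ v) = some v)
    (hψf : ∀ v ∈ b, (ψ v).1 = i → fmap i (ψ v) = some x)
    (h0 : ∃ v ∈ b, (ψ v).1 = i) : False := by
  set e := b.image ψ with he
  have hinjOn : Set.InjOn ψ b := by
    intro v hv w hw hvw
    have h1 := hψh v hv
    have h2 := hψh w hw
    rw [hvw, h2] at h1
    exact (Option.some_inj.1 h1).symm
  have hecard : e.card = 4 := by
    rw [he, Finset.card_image_of_injOn hinjOn, hEG _ b hb]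
  have hE1 : IsE1 EG i e := by
    refine ⟨hecard, ?_, ?_, b, hb, ?_⟩
    · obtain ⟨v, hv, hvi⟩ := h0
      exact ⟨ψ v, Finset.mem_image_of_mem _ hv, hvi⟩
    · intro v hv w hw hvi hwi
      obtain ⟨v', hv', rfl⟩ := Finset.mem_image.1 hv
      obtain ⟨w', hw', rfl⟩ := Finset.mem_image.1 hw
      rw [hψf v' hv' hvi, hψf w' hw' hwi]
    · rw [he, Finset.image_image]
      exact Finset.image_congr (fun v hv => hψh v hv)
  refine hA e ⟨i, Or.inl hE1⟩ ?_
  intro v hv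
  obtain ⟨v', hv', rfl⟩ := Finset.mem_image.1 hv
  exact hψA v' hv'

lemma cross_indep (hm : 2 ≤ m) (hEG : ∀ i, ∀ b ∈ EG i, b.card = 4)
    (hA : ∀ e, IsCircEdge EG e → ¬ e ⊆ A) (i : ZMod m) (x : P i) :
    ∀ b ∈ EG (i+1),
      ¬ b ⊆ (Fib A i x).image Sum.inr ∪ (Xset A (i+1)).image Sum.inl := by
  intro b hb hsub
  have hmem : ∀ v ∈ b, (∃ y ∈ Fib A i x, v = Sum.inr y) ∨
      (∃ z ∈ Xset A (i+1), v = Sum.inl z) := by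
    intro v hv
    rcases Finset.mem_union.1 (hsub hv) with h | h
    · obtain ⟨y, hy, rfl⟩ := Finset.mem_image.1 h
      exact Or.inl ⟨y, hy, rfl⟩
    · obtain ⟨z, hz, rfl⟩ := Finset.mem_image.1 h
      exact Or.inr ⟨z, hz, rfl⟩
  by_cases hR : ∃ y, Sum.inr y ∈ b
  · obtain ⟨y₀, hy₀⟩ := hR
    have hy₀F : y₀ ∈ Fib A i x := by
      rcases hmem _ hy₀ with ⟨y, hy, heq⟩ | ⟨z, hz, heq⟩
      · rw [Sum.inr.injEq] at heq
        exact heq ▸ hy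
      · exact absurd heq (by simp)
    by_cases hL : ∃ z, Sum.inl z ∈ b
    · obtain ⟨z₀, hz₀⟩ := hL
      have hz₀X : z₀ ∈ Xset A (i+1) := by
        rcases hmem _ hz₀ with ⟨y, hy, heq⟩ | ⟨z, hz, heq⟩
        · exact absurd heq (by simp)
        · rw [Sum.inl.injEq] at heq
          exact heq ▸ hz
      have hQne : Nonempty (Q (i+1+1)) := ⟨wit A hz₀X⟩
      set ψ : P (i+1) ⊕ Q (i+1) → CVtx m P Q := fun v =>
        Sum.elim
          (fun z => (⟨i+1, (z, if h : z ∈ Xset A (i+1) then wit A h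
            else Classical.arbitrary _)⟩ : CVtx m P Q))
          (fun y => (⟨i, (x, y)⟩ : CVtx m P Q)) v with hψ
      apply build_E1 A EG hEG hA i x hb ψ ?_ ?_ ?_ ?_
      · intro v hv
        rcases hmem v hv with ⟨y, hy, rfl⟩ | ⟨z, hz, rfl⟩
        · exact (mem_Fib A).1 hy
        · simp only [hψ, Sum.elim_inl]
          rw [dif_pos hz]
          exact wit_spec A hz
      · intro v hv
        rcases hmem v hv with ⟨y, hy, rfl⟩ | ⟨z, hz, rfl⟩
        · exact hmap_mk_self i (x, y)
        · exact hmap_mk_succ (succ_ne hm i) _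
      · intro v hv hvi
        rcases hmem v hv with ⟨y, hy, rfl⟩ | ⟨z, hz, rfl⟩
        · exact fmap_mk i (x, y)
        · exact absurd hvi (succ_ne hm i)
      · exact ⟨Sum.inr y₀, hy₀, rfl⟩
    · set ψ : P (i+1) ⊕ Q (i+1) → CVtx m P Q :=
        Sum.elim (fun _ => (⟨i, (x, y₀)⟩ : CVtx m P Q))
          (fun y => (⟨i, (x, y)⟩ : CVtx m P Q)) with hψ
      apply build_E1 A EG hEG hA i x hb ψ ?_ ?_ ?_ ?_
      · intro v hv
        rcases hmem v hv with ⟨y, hy, rfl⟩ | ⟨z, hz, rfl⟩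
        · exact (mem_Fib A).1 hy
        · exact absurd ⟨z, hv⟩ hL
      · intro v hv
        rcases hmem v hv with ⟨y, hy, rfl⟩ | ⟨z, hz, rfl⟩
        · exact hmap_mk_self i (x, y)
        · exact absurd ⟨z, hv⟩ hL
      · intro v hv hvi
        rcases hmem v hv with ⟨y, hy, rfl⟩ | ⟨z, hz, rfl⟩
        · exact fmap_mk i (x, y)
        · exact absurd ⟨z, hv⟩ hL
      · exact ⟨Sum.inr y₀, hy₀, rfl⟩
  · have hbl : b ⊆ (Xset A (i+1)).image Sum.inl := by
      intro v hv
      rcases hmem v hv with ⟨y, hy, rfl⟩ | ⟨z, hz, rfl⟩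
      · exact absurd ⟨y, hv⟩ hR
      · exact Finset.mem_image_of_mem _ hz
    exact lem_inl A EG hEG hA (i+1) b hb hbl

end Aux4
section Aux5
set_option linter.unusedSectionVars false
variable {m : ℕ} [NeZero m] {P Q : ZMod m → Type}
  [∀ i, Fintype (P i)] [∀ i, Fintype (Q i)]
  [∀ i, DecidableEq (P i)] [∀ i, DecidableEq (Q i)]
  (A : Finset (CVtx m P Q))
  (EG : ∀ i : ZMod m, Finset (Finset (P i ⊕ Q i)))

lemma key1 (hm : 2 ≤ m) (hEG : ∀ i, ∀ b ∈ EG i, b.card = 4)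
    (hA : ∀ e, IsCircEdge EG e → ¬ e ⊆ A) {α : ZMod m → ℕ}
    (hα : ∀ i, indepNumOn (EG i) Finset.univ = α i + 1)
    (i : ZMod m) (x : P i) :
    (Fib A i x).card + (Xset A (i+1)).card ≤ α (i+1) + 1 := by
  have hdis : Disjoint
      ((Fib A i x).image (Sum.inr : Q (i+1) → P (i+1) ⊕ Q (i+1)))
      ((Xset A (i+1)).image Sum.inl) := by
    rw [Finset.disjoint_left]
    rintro v hv hv'
    obtain ⟨y, -, rfl⟩ := Finset.mem_image.1 hv
    obtain ⟨z, -, h⟩ := Finset.mem_image.1 hv'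
    exact absurd h (by simp)
  have hle := le_indepNumOn (E := EG (i+1))
    (B := (Fib A i x).image Sum.inr ∪ (Xset A (i+1)).image Sum.inl)
    (Finset.subset_univ _) (cross_indep A EG hm hEG hA i x)
  rw [Finset.card_union_of_disjoint hdis,
    Finset.card_image_of_injective _ Sum.inr_injective,
    Finset.card_image_of_injective _ Sum.inl_injective, hα (i+1)] at hle
  exact hle

lemma key2 (hm : 2 ≤ m) (hEG : ∀ i, ∀ b ∈ EG i, b.card = 4)
    (hA : ∀ e, IsCircEdge EG e → ¬ e ⊆ A) {α : ZMod m → ℕ}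
    (hα'' : ∀ i, indepNumOn (EG i)
      (Finset.univ.filter fun v => Sum.isRight v = true) ≤ α i)
    (i : ZMod m) (x : P i) :
    (Fib A i x).card ≤ α (i+1) := by
  have hle := le_indepNumOn (E := EG (i+1))
      (B := (Fib A i x).image (Sum.inr : Q (i+1) → P (i+1) ⊕ Q (i+1)))
      (S := Finset.univ.filter fun v => Sum.isRight v = true) ?_ ?_
  · rw [Finset.card_image_of_injective _ Sum.inr_injective] at hle
    exact hle.trans (hα'' (i+1))
  · intro v hv
    obtain ⟨y, -, rfl⟩ := Finset.mem_image.1 hv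
    simp
  · intro e he hsub
    exact cross_indep A EG hm hEG hA i x e he
      (hsub.trans Finset.subset_union_left)

lemma card_slice (i : ZMod m) :
    (A.filter fun v => v.1 = i).card = ∑ x ∈ Xset A i, (Fib A i x).card := by
  set φ : (Σ _ : P i, Q (i+1)) → CVtx m P Q := fun p => ⟨i, (p.1, p.2)⟩ with hφ
  have hφinj : Function.Injective φ := by
    rintro ⟨x₁, y₁⟩ ⟨x₂, y₂⟩ h
    simp only [hφ, Sigma.mk.inj_iff, heq_eq_eq, Prod.mk.injEq, true_and] at h
    simp [Sigma.mk.inj_iff, h.1, h.2]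
  have himg : ((Xset A i).sigma fun x => Fib A i x).image φ
      = A.filter fun v => v.1 = i := by
    ext v
    simp only [Finset.mem_image, Finset.mem_sigma, Finset.mem_filter]
    constructor
    · rintro ⟨⟨x, y⟩, ⟨-, hy⟩, rfl⟩
      exact ⟨(mem_Fib A).1 hy, rfl⟩
    · rintro ⟨hvA, hv1⟩
      obtain ⟨j, px, py⟩ := v
      cases hv1
      exact ⟨⟨px, py⟩, ⟨(mem_Xset A).2 ⟨py, hvA⟩, (mem_Fib A).2 hvA⟩, rfl⟩
  rw [← himg, Finset.card_image_of_injective _ hφinj, Finset.card_sigma]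

lemma card_A_eq : A.card = ∑ i : ZMod m, (A.filter fun v => v.1 = i).card :=
  Finset.card_eq_sum_card_fiberwise (fun v _ => Finset.mem_univ v.1)

lemma bmax_pos {i : ZMod m} (hne : (Xset A i).Nonempty) : 1 ≤ bmax A i := by
  obtain ⟨x, hx⟩ := hne
  have h1 : 1 ≤ (Fib A i x).card :=
    Finset.card_pos.2 ⟨wit A hx, (mem_Fib A).2 (wit_spec A hx)⟩
  exact h1.trans (Finset.le_sup (f := fun x => (Fib A i x).card) hx)

lemma slice_bound (hA : ∀ e, IsCircEdge EG e → ¬ e ⊆ A) (i : ZMod m)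
    (hne : (Xset A i).Nonempty) :
    (A.filter fun v => v.1 = i).card + 1 ≤ (Xset A i).card + bmax A i := by
  obtain ⟨x₀, hx₀, hsup⟩ :=
    Finset.exists_mem_eq_sup (Xset A i) hne (fun x => (Fib A i x).card)
  have hrest : ∀ x ∈ (Xset A i).erase x₀, (Fib A i x).card ≤ 1 := by
    intro x hx
    by_contra hc
    have h2 : 2 ≤ (Fib A i x).card := by omega
    have h2' : 2 ≤ (Fib A i x₀).card :=
      le_trans h2 (hsup ▸ Finset.le_sup (f := fun x => (Fib A i x).card) (Finset.mem_of_mem_erase hx))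
    exact heavy_unique A EG hA i (Finset.ne_of_mem_erase hx) h2 h2'
  have e1 : (A.filter fun v => v.1 = i).card
      = (Fib A i x₀).card + ∑ x ∈ (Xset A i).erase x₀, (Fib A i x).card := by
    rw [card_slice, ← Finset.add_sum_erase _ _ hx₀]
  have e2 : ∑ x ∈ (Xset A i).erase x₀, (Fib A i x).card
      ≤ ((Xset A i).erase x₀).card := by
    calc ∑ x ∈ (Xset A i).erase x₀, (Fib A i x).card
        ≤ ∑ _x ∈ (Xset A i).erase x₀, 1 := Finset.sum_le_sum hrest
      _ = ((Xset A i).erase x₀).card := by simp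
  have e3 : bmax A i = (Fib A i x₀).card := hsup
  have e4 : 1 ≤ (Xset A i).card := Finset.card_pos.2 hne
  have e5 : ((Xset A i).erase x₀).card = (Xset A i).card - 1 :=
    Finset.card_erase_of_mem hx₀
  omega

lemma slice_empty {i : ZMod m} (hne : ¬ (Xset A i).Nonempty) :
    (A.filter fun v => v.1 = i).card = 0 := by
  rw [card_slice, Finset.not_nonempty_iff_eq_empty.1 hne, Finset.sum_empty]

lemma chi_iff (i : ZMod m) : (∃ v ∈ A, v.1 = i) ↔ (Xset A i).Nonempty := by
  constructor
  · rintro ⟨⟨j, p⟩, hv, rfl⟩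
    exact ⟨p.1, (mem_Xset A).2 ⟨p.2, by simpa using hv⟩⟩
  · rintro ⟨x, hx⟩
    exact ⟨⟨i, (x, wit A hx)⟩, wit_spec A hx, rfl⟩

end Aux5
theorem stmt_9 (m : ℕ) [NeZero m] (hm : 2 ≤ m)
    (P Q : ZMod m → Type) [∀ i, Fintype (P i)] [∀ i, Fintype (Q i)]
    [∀ i, DecidableEq (P i)] [∀ i, DecidableEq (Q i)]
    (EG : ∀ i : ZMod m, Finset (Finset (P i ⊕ Q i)))
    (hEG : ∀ i, ∀ b ∈ EG i, b.card = 4)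
    (α : ZMod m → ℕ)
    (hα : ∀ i, indepNumOn (EG i) Finset.univ = α i + 1)
    (hα' : ∀ i, indepNumOn (EG i)
      (Finset.univ.filter fun v => Sum.isLeft v = true) ≤ α i)
    (hα'' : ∀ i, indepNumOn (EG i)
      (Finset.univ.filter fun v => Sum.isRight v = true) ≤ α i)
    (A : Finset (CVtx m P Q))
    (hA : ∀ e, IsCircEdge EG e → ¬ e ⊆ A) :
    (A.card : ℤ) ≤ ∑ i : ZMod m,
      ((α i : ℤ) - 1 + if ∃ v ∈ A, v.1 = i then 1 else 0) := by
  classical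
  set χ : ZMod m → ℤ := fun i => if (Xset A i).Nonempty then 1 else 0 with hχ
  have h2 : ∀ i : ZMod m, ((A.filter fun v => v.1 = i).card : ℤ)
      ≤ ((Xset A i).card : ℤ) + χ i * ((bmax A i : ℤ) - 1) := by
    intro i
    by_cases hne : (Xset A i).Nonempty
    · have hb := slice_bound A EG hA i hne
      have hp := bmax_pos A hne
      simp only [hχ, if_pos hne, one_mul]
      have hb' : ((A.filter fun v => v.1 = i).card : ℤ) + 1
          ≤ ((Xset A i).card : ℤ) + (bmax A i : ℤ) := by exact_mod_cast hb
      linarith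
    · rw [slice_empty A hne]
      simp only [hχ, if_neg hne, zero_mul, add_zero]
      positivity
  have h3 : ∀ i : ZMod m, ((Xset A i).card : ℤ) - χ i + χ (i-1) * (bmax A (i-1) : ℤ)
      ≤ (α i : ℤ) - 1 + χ (i-1) := by
    intro i
    obtain ⟨j, rfl⟩ : ∃ j, i = j + 1 := ⟨i - 1, by ring⟩
    have hj : (j + 1) - 1 = j := by ring
    rw [hj]
    by_cases h1 : (Xset A j).Nonempty
    · obtain ⟨x₀, hx₀, hsup⟩ :=
        Finset.exists_mem_eq_sup _ h1 (fun x => (Fib A j x).card)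
      have hk1 := key1 A EG hm hEG hA hα j x₀
      have hk2 := key2 A EG hm hEG hA hα'' j x₀
      have hbn : bmax A j = (Fib A j x₀).card := hsup
      have hb : (bmax A j : ℤ) = ((Fib A j x₀).card : ℤ) := by exact_mod_cast hbn
      by_cases h2' : (Xset A (j+1)).Nonempty
      · simp only [hχ, if_pos h1, if_pos h2', one_mul]
        have hk1' : ((Fib A j x₀).card : ℤ) + ((Xset A (j+1)).card : ℤ)
            ≤ (α (j+1) : ℤ) + 1 := by exact_mod_cast hk1
        rw [hb]; linarith
      · simp only [hχ, if_pos h1, if_neg h2', one_mul]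
        have hz : ((Xset A (j+1)).card : ℤ) = 0 := by
          simp [Finset.not_nonempty_iff_eq_empty.1 h2']
        have hk2' : ((Fib A j x₀).card : ℤ) ≤ (α (j+1) : ℤ) := by exact_mod_cast hk2
        rw [hb, hz]; linarith
    · simp only [hχ, if_neg h1, zero_mul, add_zero]
      by_cases h2' : (Xset A (j+1)).Nonempty
      · simp only [if_pos h2']
        have hk0 : ((Xset A (j+1)).card : ℤ) ≤ (α (j+1) : ℤ) := by
          exact_mod_cast key0 A EG hEG hA hα' (j+1)
        linarith
      · simp only [if_neg h2']
        have hz : ((Xset A (j+1)).card : ℤ) = 0 := by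
          simp [Finset.not_nonempty_iff_eq_empty.1 h2']
        have hp : (1 : ℤ) ≤ (α (j+1) : ℤ) := by
          exact_mod_cast alpha_pos EG hEG hα hα' hα'' (j+1)
        rw [hz]; linarith
  have hshift : ∀ f : ZMod m → ℤ, ∑ i : ZMod m, f (i-1) = ∑ i : ZMod m, f i :=
    fun f => Fintype.sum_equiv (Equiv.subRight (1 : ZMod m)) _ _ (fun i => rfl)
  calc (A.card : ℤ) = ∑ i : ZMod m, ((A.filter fun v => v.1 = i).card : ℤ) := by
        rw [card_A_eq A]; push_cast; rfl
    _ ≤ ∑ i : ZMod m, (((Xset A i).card : ℤ) + χ i * ((bmax A i : ℤ) - 1)) :=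
        Finset.sum_le_sum (fun i _ => h2 i)
    _ = ∑ i : ZMod m, (((Xset A i).card : ℤ) - χ i)
        + ∑ i : ZMod m, χ i * (bmax A i : ℤ) := by
        rw [← Finset.sum_add_distrib]
        exact Finset.sum_congr rfl (fun i _ => by ring)
    _ = ∑ i : ZMod m, (((Xset A i).card : ℤ) - χ i)
        + ∑ i : ZMod m, χ (i-1) * (bmax A (i-1) : ℤ) := by
        rw [hshift (fun i => χ i * (bmax A i : ℤ))]
    _ = ∑ i : ZMod m, (((Xset A i).card : ℤ) - χ i + χ (i-1) * (bmax A (i-1) : ℤ)) :=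
        Finset.sum_add_distrib.symm
    _ ≤ ∑ i : ZMod m, ((α i : ℤ) - 1 + χ (i-1)) := Finset.sum_le_sum (fun i _ => h3 i)
    _ = ∑ i : ZMod m, ((α i : ℤ) - 1) + ∑ i : ZMod m, χ (i-1) :=
        Finset.sum_add_distrib
    _ = ∑ i : ZMod m, ((α i : ℤ) - 1) + ∑ i : ZMod m, χ i := by rw [hshift χ]
    _ = ∑ i : ZMod m, ((α i : ℤ) - 1 + χ i) := Finset.sum_add_distrib.symm
    _ = ∑ i : ZMod m, ((α i : ℤ) - 1 + if ∃ v ∈ A, v.1 = i then 1 else 0) :=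
        Finset.sum_congr rfl (fun i _ => by
          simp only [hχ]
          exact congrArg _ (if_congr (chi_iff A i).symm rfl rfl))
end

section
/- Let H_m (m ≥ 4) be the 4-graph on Z/m × (Z/2)⁶ defined in Section 7. If A is an independent set of vertices in H_m, then Σ_{i∈Z/m} ε_i(A) + Σ_{i∈Z/m} Σ_{x∈(Z/2)²} |A₂(i,x)| ≤ 2m + Σ_{i∈Z/m} χ[A₁(i) ≠ ∅]. -/
/-!
Write `∑ₓ |A₂(i,x)| = |A₁(i)| + δᵢ` with `δᵢ = ∑ₓ (|A₂(i,x)| - 1)`. For an independent set,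
edges of types 2 and 4a force `δᵢ` and `εᵢ` to come from a single slice, and the theorem is the
sum over `i` (after shifting indices) of the local inequality
`εᵢ + δᵢ₊₂ + |A₁(i+3)| ≤ 2 + χ[A₁(i+3) ≠ ∅]`. Its ingredients: every slice has at most three
elements (types 1 and 2); `εᵢ > 0` forces `δᵢ₊₂ = 0` (type 4b); and edges of types 3 and 4c say
that a slice with two elements shares no pair sum `a + b` (`a ≠ b`) with `A₁(i+3)`, which in
`(ℤ/2)²` caps both sets at two elements, since three distinct elements have every nonzero
element as a pair sum. The bound `m ≥ 4` keeps the levels `i + 1, i + 2, i + 3` distinct from `i`.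
-/

open Finset

abbrev G2 := ZMod 2 × ZMod 2

/-- Vertices of the 4-graph `H_m`: elements `(i, x, y, z)` of `ℤ/m ⊕ (ℤ/2)⁶`. -/
abbrev HVtx (m : ℕ) := ZMod m × G2 × G2 × G2

/-- Edge predicate of the 4-graph `H_m` on `ℤ/m ⊕ (ℤ/2)⁶` (edge types 1, 2, 3,
4a, 4b, 4c of Section 7). -/
def IsHmEdge {m : ℕ} (e : Finset (HVtx m)) : Prop :=
  e.card = 4 ∧ (
  -- type 1
  (∃ (i : ZMod m) (x y : G2) (z₁ z₂ z₃ z₄ : G2),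
     e = {(i, x, y, z₁), (i, x, y, z₂), (i, x, y, z₃), (i, x, y, z₄)}) ∨
  -- type 2
  (∃ (i : ZMod m) (x₁ y₁ z₁ x₂ y₂ z₂ x₃ y₃ z₃ x₄ y₄ z₄ : G2),
     x₁ + x₂ + x₃ + x₄ = 0 ∧
     (x₁, y₁) ≠ (x₂, y₂) ∧ (x₁, y₁) ≠ (x₃, y₃) ∧ (x₁, y₁) ≠ (x₄, y₄) ∧
     (x₂, y₂) ≠ (x₃, y₃) ∧ (x₂, y₂) ≠ (x₄, y₄) ∧ (x₃, y₃) ≠ (x₄, y₄) ∧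
     e = {(i, x₁, y₁, z₁), (i, x₂, y₂, z₂), (i, x₃, y₃, z₃), (i, x₄, y₄, z₄)}) ∨
  -- type 3
  (∃ (i : ZMod m) (x₁ y₁' z₁' y₁'' z₁'' x₂' y₂' z₂' x₂'' y₂'' z₂'' : G2),
     y₁' ≠ y₁'' ∧ y₁' + y₁'' + x₂' + x₂'' = 0 ∧
     e = {(i, x₁, y₁', z₁'), (i, x₁, y₁'', z₁''),
          (i + 1, x₂', y₂', z₂'), (i + 1, x₂'', y₂'', z₂'')}) ∨
  -- type 4a
  (∃ (i : ZMod m) (x₁ y₁ z₁' z₁'' x₂ y₂ z₂' z₂'' : G2),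
     z₁' ≠ z₁'' ∧ z₂' ≠ z₂'' ∧ (x₁, y₁) ≠ (x₂, y₂) ∧
     e = {(i, x₁, y₁, z₁'), (i, x₁, y₁, z₁''),
          (i, x₂, y₂, z₂'), (i, x₂, y₂, z₂'')}) ∨
  -- type 4b
  (∃ (i : ZMod m) (x₁ y₁ z₁' z₁'' x₂ y₂' z₂' y₂'' z₂'' : G2),
     z₁' ≠ z₁'' ∧ y₂' ≠ y₂'' ∧
     e = {(i, x₁, y₁, z₁'), (i, x₁, y₁, z₁''),
          (i + 2, x₂, y₂', z₂'), (i + 2, x₂, y₂'', z₂'')}) ∨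
  -- type 4c
  (∃ (i : ZMod m) (x₁ y₁ z₁' z₁'' x₂' y₂' z₂' x₂'' y₂'' z₂'' : G2),
     z₁' ≠ z₁'' ∧ z₁' + z₁'' + x₂' + x₂'' = 0 ∧
     e = {(i, x₁, y₁, z₁'), (i, x₁, y₁, z₁''),
          (i + 3, x₂', y₂', z₂'), (i + 3, x₂'', y₂'', z₂'')}))

/-- `A₃(i,x,y) = { z : (i,x,y,z) ∈ A }`. -/
def A3 {m : ℕ} (A : Finset (HVtx m)) (i : ZMod m) (x y : G2) : Finset G2 :=
  Finset.univ.filter fun z => (i, x, y, z) ∈ A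

/-- `A₂(i,x) = { y : ∃ z, (i,x,y,z) ∈ A }`. -/
def A2 {m : ℕ} (A : Finset (HVtx m)) (i : ZMod m) (x : G2) : Finset G2 :=
  Finset.univ.filter fun y => ∃ z, (i, x, y, z) ∈ A

/-- `A₁(i) = { x : ∃ y z, (i,x,y,z) ∈ A }`. -/
def A1 {m : ℕ} (A : Finset (HVtx m)) (i : ZMod m) : Finset G2 :=
  Finset.univ.filter fun x => (Finset.univ.filter fun y : G2 => (A3 A i x y).Nonempty).Nonempty

/-- `εᵢ(A) = ∑_{x,y} max{0, |A₃(i,x,y)| - 1}` (note `t - 1 = max{0, t-1}` in `ℕ`). -/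
def epsi {m : ℕ} (A : Finset (HVtx m)) (i : ZMod m) : ℕ :=
  ∑ x : G2, ∑ y : G2, ((A3 A i x y).card - 1)

def pairSums {α : Type*} [Add α] [DecidableEq α] (S : Finset α) : Finset α :=
  S.offDiag.image fun p => p.1 + p.2

lemma mem_pairSums {α : Type*} [Add α] [DecidableEq α] {S : Finset α} {s : α} :
    s ∈ pairSums S ↔ ∃ a ∈ S, ∃ b ∈ S, a ≠ b ∧ a + b = s := by
  simp [pairSums, and_assoc]

namespace G2

lemma add_self (a : G2) : a + a = 0 := by
  revert a; decide

lemma eq_univ_of_three_lt_card (S : Finset G2) (hS : 3 < #S) : S = univ := by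
  revert S; decide

lemma eq_of_add_eq_zero {a b : G2} (h : a + b = 0) : a = b := by
  revert a b; decide

lemma mem_pairSums_of_two_lt_card {S : Finset G2} (hS : 2 < #S) {s : G2} (hs : s ≠ 0) :
    s ∈ pairSums S := by
  revert S s; decide

lemma card_le_two_of_disjoint_pairSums {S T : Finset G2}
    (hST : Disjoint (pairSums S) (pairSums T)) (hT : 1 < #T) : #S ≤ 2 := by
  by_contra! hS
  obtain ⟨a, ha, b, hb, hab⟩ := one_lt_card.mp hT
  have hs : a + b ∈ pairSums T := mem_pairSums.mpr ⟨a, ha, b, hb, hab, rfl⟩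
  have hs0 : a + b ≠ 0 := fun h => hab (eq_of_add_eq_zero h)
  exact disjoint_left.mp hST (mem_pairSums_of_two_lt_card hS hs0) hs

end G2

lemma Fintype.sum_eq_card_filter_ne_zero_add_sum_tsub_one {ι : Type*} [Fintype ι]
    (f : ι → ℕ) :
    ∑ i, f i = #{i | f i ≠ 0} + ∑ i, (f i - 1) := by
  rw [card_filter, ← sum_add_distrib]
  exact Finset.sum_congr rfl fun i _ => by split_ifs <;> omega

lemma Fintype.exists_sum_tsub_one_eq {ι : Type*} [Fintype ι] [Nonempty ι] (f : ι → ℕ)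
    (hf : ∀ a b, a ≠ b → 2 ≤ f a → f b ≤ 1) : ∃ a, ∑ i, (f i - 1) = f a - 1 := by
  by_cases h : ∃ a, 2 ≤ f a
  · obtain ⟨a, ha⟩ := h
    refine ⟨a, Finset.sum_eq_single a (fun b _ hba => ?_) (by simp)⟩
    have := hf a b hba.symm ha
    omega
  · simp only [not_exists, not_le] at h
    obtain ⟨a⟩ := ‹Nonempty ι›
    refine ⟨a, ?_⟩
    rw [Finset.sum_eq_zero fun i _ => by have := h i; omega]
    have := h a
    omega

lemma ZMod.self_ne_add_natCast {m c : ℕ} (hc : 0 < c) (hcm : c < m) (i : ZMod m) :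
    i ≠ i + c := by
  rw [Ne, left_eq_add, ZMod.natCast_eq_zero_iff]
  exact fun h => absurd (Nat.le_of_dvd hc h) (by omega)

section Slices

variable {m : ℕ} {A : Finset (HVtx m)} {i : ZMod m} {x y z : G2}

@[simp] lemma mem_A3 : z ∈ A3 A i x y ↔ (i, x, y, z) ∈ A := by
  simp [A3]

@[simp] lemma mem_A2 : y ∈ A2 A i x ↔ ∃ z, (i, x, y, z) ∈ A := by
  simp [A2]

@[simp] lemma mem_A1 : x ∈ A1 A i ↔ ∃ y z, (i, x, y, z) ∈ A := by
  rw [A1, mem_filter, filter_nonempty_iff]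
  simp [Finset.Nonempty]

end Slices

def deltaA {m : ℕ} (A : Finset (HVtx m)) (i : ZMod m) : ℕ :=
  ∑ x : G2, (#(A2 A i x) - 1)

lemma sum_card_A2 {m : ℕ} (A : Finset (HVtx m)) (i : ZMod m) :
    ∑ x, #(A2 A i x) = #(A1 A i) + deltaA A i := by
  rw [Fintype.sum_eq_card_filter_ne_zero_add_sum_tsub_one, deltaA]
  congr 2
  ext x
  simp only [mem_filter, mem_univ, true_and, card_ne_zero, Finset.Nonempty, mem_A2, mem_A1]

section Independent

variable {m : ℕ} {A : Finset (HVtx m)} (hA : ∀ e : Finset (HVtx m), IsHmEdge e → ¬ e ⊆ A)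
include hA

lemma card_A3_le_three (i : ZMod m) (x y : G2) : #(A3 A i x y) ≤ 3 := by
  by_contra! h
  have hz : ∀ z, (i, x, y, z) ∈ A := fun z =>
    mem_A3.mp (G2.eq_univ_of_three_lt_card _ h ▸ mem_univ z)
  refine hA {(i, x, y, (0, 0)), (i, x, y, (0, 1)), (i, x, y, (1, 0)), (i, x, y, (1, 1))}
    ⟨card_eq_four.mpr ⟨_, _, _, _, ?_, ?_, ?_, ?_, ?_, ?_, rfl⟩,
      Or.inl ⟨i, x, y, _, _, _, _, rfl⟩⟩
    (by simp [insert_subset_iff, hz]) <;> simp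

lemma card_A2_le_three (i : ZMod m) (x : G2) : #(A2 A i x) ≤ 3 := by
  by_contra! h
  have hy : ∀ y, ∃ z, (i, x, y, z) ∈ A := fun y =>
    mem_A2.mp (G2.eq_univ_of_three_lt_card _ h ▸ mem_univ y)
  choose z hz using hy
  refine hA {(i, x, (0, 0), z (0, 0)), (i, x, (0, 1), z (0, 1)), (i, x, (1, 0), z (1, 0)),
      (i, x, (1, 1), z (1, 1))}
    ⟨card_eq_four.mpr ⟨_, _, _, _, ?_, ?_, ?_, ?_, ?_, ?_, rfl⟩,
      Or.inr <| Or.inl ⟨i, x, _, _, x, _, _, x, _, _, x, _, _, by simp [G2.add_self],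
        ?_, ?_, ?_, ?_, ?_, ?_, rfl⟩⟩
    (by simp [insert_subset_iff, hz]) <;> simp

lemma card_A1_le_three (i : ZMod m) : #(A1 A i) ≤ 3 := by
  by_contra! h
  have hx : ∀ x, ∃ y z, (i, x, y, z) ∈ A := fun x =>
    mem_A1.mp (G2.eq_univ_of_three_lt_card _ h ▸ mem_univ x)
  choose y z hz using hx
  refine hA {(i, (0, 0), y (0, 0), z (0, 0)), (i, (0, 1), y (0, 1), z (0, 1)),
      (i, (1, 0), y (1, 0), z (1, 0)), (i, (1, 1), y (1, 1), z (1, 1))}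
    ⟨card_eq_four.mpr ⟨_, _, _, _, ?_, ?_, ?_, ?_, ?_, ?_, rfl⟩,
      Or.inr <| Or.inl ⟨i, _, _, _, _, _, _, _, _, _, _, _, _, by decide,
        ?_, ?_, ?_, ?_, ?_, ?_, rfl⟩⟩
    (by simp [insert_subset_iff, hz]) <;> simp

lemma card_A2_le_one_of_ne {i : ZMod m} {x x' : G2} (hx : x ≠ x') (h : 2 ≤ #(A2 A i x)) :
    #(A2 A i x') ≤ 1 := by
  by_contra! h'
  obtain ⟨y₁, hy₁, y₂, hy₂, hy⟩ := one_lt_card.mp h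
  obtain ⟨y₃, hy₃, y₄, hy₄, hy'⟩ := one_lt_card.mp h'
  obtain ⟨z₁, hz₁⟩ := mem_A2.mp hy₁
  obtain ⟨z₂, hz₂⟩ := mem_A2.mp hy₂
  obtain ⟨z₃, hz₃⟩ := mem_A2.mp hy₃
  obtain ⟨z₄, hz₄⟩ := mem_A2.mp hy₄
  refine hA {(i, x, y₁, z₁), (i, x, y₂, z₂), (i, x', y₃, z₃), (i, x', y₄, z₄)}
    ⟨card_eq_four.mpr ⟨_, _, _, _, ?_, ?_, ?_, ?_, ?_, ?_, rfl⟩,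
      Or.inr <| Or.inl ⟨i, _, _, _, _, _, _, _, _, _, _, _, _, by simp [G2.add_self],
        ?_, ?_, ?_, ?_, ?_, ?_, rfl⟩⟩
    (by simp [insert_subset_iff, *]) <;> simp [hx, hy, hy']

lemma card_A3_le_one_of_ne {i : ZMod m} {x y x' y' : G2} (hxy : (x, y) ≠ (x', y'))
    (h : 2 ≤ #(A3 A i x y)) : #(A3 A i x' y') ≤ 1 := by
  by_contra! h'
  obtain ⟨z₁, hz₁, z₂, hz₂, hz⟩ := one_lt_card.mp h
  obtain ⟨z₃, hz₃, z₄, hz₄, hz'⟩ := one_lt_card.mp h'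
  rw [mem_A3] at hz₁ hz₂ hz₃ hz₄
  refine hA {(i, x, y, z₁), (i, x, y, z₂), (i, x', y', z₃), (i, x', y', z₄)}
    ⟨card_eq_four.mpr ⟨_, _, _, _, ?_, ?_, ?_, ?_, ?_, ?_, rfl⟩,
      Or.inr <| Or.inr <| Or.inr <| Or.inl ⟨i, _, _, _, _, _, _, _, _, hz, hz', hxy, rfl⟩⟩
    (by simp [insert_subset_iff, *]) <;> simp_all

lemma card_A2_add_two_le_one (hm : 4 ≤ m) {i : ZMod m} {x y : G2} (h : 2 ≤ #(A3 A i x y))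
    (x' : G2) : #(A2 A (i + 2) x') ≤ 1 := by
  by_contra! h'
  obtain ⟨z₁, hz₁, z₂, hz₂, hz⟩ := one_lt_card.mp h
  obtain ⟨y₁, hy₁, y₂, hy₂, hy⟩ := one_lt_card.mp h'
  rw [mem_A3] at hz₁ hz₂
  obtain ⟨u₁, hu₁⟩ := mem_A2.mp hy₁
  obtain ⟨u₂, hu₂⟩ := mem_A2.mp hy₂
  have hi : i ≠ i + 2 := by
    exact_mod_cast ZMod.self_ne_add_natCast (c := 2) (by norm_num) (by omega) i
  refine hA {(i, x, y, z₁), (i, x, y, z₂), (i + 2, x', y₁, u₁), (i + 2, x', y₂, u₂)}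
    ⟨card_eq_four.mpr ⟨_, _, _, _, ?_, ?_, ?_, ?_, ?_, ?_, rfl⟩,
      Or.inr <| Or.inr <| Or.inr <| Or.inr <| Or.inl
        ⟨i, _, _, _, _, _, _, _, _, _, hz, hy, rfl⟩⟩
    (by simp [insert_subset_iff, *]) <;> simp [hi, hz, hy]

lemma disjoint_pairSums_A3_A1_add_three (hm : 4 ≤ m) (i : ZMod m) (x y : G2) :
    Disjoint (pairSums (A3 A i x y)) (pairSums (A1 A (i + 3))) := by
  refine disjoint_left.mpr fun s hs hs' => ?_
  obtain ⟨z₁, hz₁, z₂, hz₂, hz, rfl⟩ := mem_pairSums.mp hs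
  obtain ⟨a, ha, b, hb, hab, hsum⟩ := mem_pairSums.mp hs'
  rw [mem_A3] at hz₁ hz₂
  obtain ⟨v₁, u₁, h₁⟩ := mem_A1.mp ha
  obtain ⟨v₂, u₂, h₂⟩ := mem_A1.mp hb
  have hi : i ≠ i + 3 := by
    exact_mod_cast ZMod.self_ne_add_natCast (c := 3) (by norm_num) (by omega) i
  refine hA {(i, x, y, z₁), (i, x, y, z₂), (i + 3, a, v₁, u₁), (i + 3, b, v₂, u₂)}
    ⟨card_eq_four.mpr ⟨_, _, _, _, ?_, ?_, ?_, ?_, ?_, ?_, rfl⟩,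
      Or.inr <| Or.inr <| Or.inr <| Or.inr <| Or.inr
        ⟨i, _, _, _, _, _, _, _, _, _, _, hz, by rw [add_assoc, hsum, G2.add_self], rfl⟩⟩
    (by simp [insert_subset_iff, *]) <;> simp [hi, hz, hab]

lemma disjoint_pairSums_A2_A1_add_one (hm : 4 ≤ m) (i : ZMod m) (x : G2) :
    Disjoint (pairSums (A2 A i x)) (pairSums (A1 A (i + 1))) := by
  refine disjoint_left.mpr fun s hs hs' => ?_
  obtain ⟨y₁, hy₁, y₂, hy₂, hy, rfl⟩ := mem_pairSums.mp hs
  obtain ⟨a, ha, b, hb, hab, hsum⟩ := mem_pairSums.mp hs'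
  obtain ⟨z₁, hz₁⟩ := mem_A2.mp hy₁
  obtain ⟨z₂, hz₂⟩ := mem_A2.mp hy₂
  obtain ⟨v₁, u₁, h₁⟩ := mem_A1.mp ha
  obtain ⟨v₂, u₂, h₂⟩ := mem_A1.mp hb
  have hi : i ≠ i + 1 := by
    exact_mod_cast ZMod.self_ne_add_natCast (c := 1) (by norm_num) (by omega) i
  refine hA {(i, x, y₁, z₁), (i, x, y₂, z₂), (i + 1, a, v₁, u₁), (i + 1, b, v₂, u₂)}
    ⟨card_eq_four.mpr ⟨_, _, _, _, ?_, ?_, ?_, ?_, ?_, ?_, rfl⟩,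
      Or.inr <| Or.inr <| Or.inl
        ⟨i, _, _, _, _, _, _, _, _, _, _, _, hy, by rw [add_assoc, hsum, G2.add_self], rfl⟩⟩
    (by simp [insert_subset_iff, *]) <;> simp [hi, hy, hab]

lemma exists_deltaA_eq (i : ZMod m) : ∃ x, deltaA A i = #(A2 A i x) - 1 :=
  Fintype.exists_sum_tsub_one_eq _ fun _ _ hx h => card_A2_le_one_of_ne hA hx h

lemma exists_epsi_eq (i : ZMod m) : ∃ x y, epsi A i = #(A3 A i x y) - 1 := by
  rw [epsi, ← Fintype.sum_prod_type' fun x y => #(A3 A i x y) - 1]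
  obtain ⟨⟨x, y⟩, h⟩ :=
    Fintype.exists_sum_tsub_one_eq _ fun _ _ hpq h => card_A3_le_one_of_ne hA hpq h
  exact ⟨x, y, h⟩

lemma epsi_add_deltaA_add_card_A1_le (hm : 4 ≤ m) (i : ZMod m) :
    epsi A i + deltaA A (i + 2) + #(A1 A (i + 3))
      ≤ 2 + if (A1 A (i + 3)).Nonempty then 1 else 0 := by
  obtain ⟨x, y, hε⟩ := exists_epsi_eq hA i
  obtain ⟨x', hδ⟩ := exists_deltaA_eq hA (i + 2)
  have hε3 := card_A3_le_three hA i x y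
  have hδ3 := card_A2_le_three hA (i + 2) x'
  have ha3 := card_A1_le_three hA (i + 3)
  have h4b (h : 2 ≤ #(A3 A i x y)) : #(A2 A (i + 2) x') ≤ 1 := card_A2_add_two_le_one hA hm h x'
  have h4c := disjoint_pairSums_A3_A1_add_three hA hm i x y
  have h3 := disjoint_pairSums_A2_A1_add_one hA hm (i + 2) x'
  rw [show i + 2 + 1 = i + 3 by ring] at h3
  have h4c₁ := G2.card_le_two_of_disjoint_pairSums h4c
  have h4c₂ := G2.card_le_two_of_disjoint_pairSums h4c.symm
  have h3₁ := G2.card_le_two_of_disjoint_pairSums h3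
  have h3₂ := G2.card_le_two_of_disjoint_pairSums h3.symm
  rw [hε, hδ]
  split_ifs with hne
  · have := hne.card_pos
    omega
  · rw [not_nonempty_iff_eq_empty.mp hne, card_empty]
    omega

end Independent

theorem stmt_14 (m : ℕ) [NeZero m] (hm : 4 ≤ m)
    (A : Finset (HVtx m))
    (hA : ∀ e : Finset (HVtx m), IsHmEdge e → ¬ e ⊆ A) :
    (∑ i : ZMod m, epsi A i) + ∑ i : ZMod m, ∑ x : G2, (A2 A i x).card
      ≤ 2 * m + ∑ i : ZMod m, (if (A1 A i).Nonempty then 1 else 0) := by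
  have shift (c : ZMod m) (f : ZMod m → ℕ) : ∑ i, f (i + c) = ∑ i, f i :=
    Equiv.sum_comp (Equiv.addRight c) f
  calc (∑ i : ZMod m, epsi A i) + ∑ i : ZMod m, ∑ x : G2, #(A2 A i x)
      = ∑ i, (epsi A i + deltaA A (i + 2) + #(A1 A (i + 3))) := by
        simp only [sum_card_A2, sum_add_distrib, shift 2 (deltaA A), shift 3 fun i => #(A1 A i)]
        ring
    _ ≤ ∑ i, (2 + if (A1 A (i + 3)).Nonempty then 1 else 0) :=
        sum_le_sum fun i _ => epsi_add_deltaA_add_card_A1_le hA hm i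
    _ = 2 * m + ∑ i : ZMod m, (if (A1 A i).Nonempty then 1 else 0) := by
        rw [sum_add_distrib, shift 3 fun i => if (A1 A i).Nonempty then 1 else 0, sum_const,
          card_univ, ZMod.card, smul_eq_mul, mul_comm]
end
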